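/- arXiv:2202.05920 — 8 statements merged into one kernel-verified Lean document; each statement's English description precedes it below -/
import Mathlib

section
/- Let D be a probability measure on a measurable instance space X, let U be a perturbation set with x ∈ U(x) for every x, let β > 0, and let h : X → Y be a classifier with D(Rob_{U⁻¹(U)}(h)) ≥ β. Then the selective classifier G_h satisfies: D{x : ∀ z ∈ U(x), G_h(z) = some h(x)} ≥ β, and D{x : ∀ z ∈ U(x), G_h(z) = some h(x) ∨ G_h(z) = ⊥} = 1. -/
open MeasureTheory

/-- `UinvU U x` is the set `U⁻¹(U)(x)` of natural examples sharing an adversarial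
perturbation with `x`. -/
def UinvU {X : Type*} (U : X → Set X) (x : X) : Set X := {x' | ∃ z, z ∈ U x ∧ z ∈ U x'}

/-- Robust region of a classifier `h` w.r.t. a perturbation set `V`. -/
def Rob {X Y : Type*} (V : X → Set X) (h : X → Y) : Set X := {x | ∀ z ∈ V x, h z = h x}

/- The selective classifier `G_h` of `h` w.r.t. `U`: on input `z` it outputs `some y` if
all points of `U⁻¹(z) = {x | z ∈ U x}` get label `y` under `h`, and abstains (`none`)
otherwise. -/
open Classical in
noncomputable def Gsel {X Y : Type*} (U : X → Set X) (h : X → Y) (z : X) : Option Y :=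
  if hp : ∃ y : Y, ∀ x', z ∈ U x' → h x' = y then some hp.choose else none

/-- **Lemma 2**: if `h` is robust w.r.t. `U⁻¹(U)` on a region of `D`-mass at least `β`, then
the selective classifier `G_h` does not abstain and agrees with `h` on that region, and with
probability 1 over natural examples `x`, on every `z ∈ U(x)` it either abstains or predicts
`h(x)`. -/
theorem selective_classifier_guarantee
    {X Y : Type*} [MeasurableSpace X] [Nonempty X] [Nonempty Y]
    (D : Measure X) [IsProbabilityMeasure D]
    (U : X → Set X) (hU : ∀ x, x ∈ U x) (β : ℝ) (hβ : 0 < β)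
    (h : X → Y) (hrob : ENNReal.ofReal β ≤ D (Rob (UinvU U) h)) :
    ENNReal.ofReal β ≤ D {x | ∀ z ∈ U x, Gsel U h z = some (h x)} ∧
    D {x | ∀ z ∈ U x, Gsel U h z = some (h x) ∨ Gsel U h z = none} = 1 := by
  have key : ∀ x z, z ∈ U x → Gsel U h z = some (h x) ∨ Gsel U h z = none := by
    intro x z hz
    unfold Gsel
    split
    · rename_i hp
      left
      rw [hp.choose_spec x hz]
    · right; rfl
  constructor
  · refine le_trans hrob (measure_mono ?_)
    intro x hx z hz
    unfold Gsel
    have hex : ∃ y : Y, ∀ x', z ∈ U x' → h x' = y := ⟨h x, fun x' hz' => hx x' ⟨z, hz, hz'⟩⟩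
    rw [dif_pos hex]
    rw [hex.choose_spec x hz]
  · have : {x | ∀ z ∈ U x, Gsel U h z = some (h x) ∨ Gsel U h z = none} = Set.univ := by
      ext x; simp only [Set.mem_setOf_eq, Set.mem_univ, iff_true]
      exact fun z hz => key x z hz
    rw [this]; exact measure_univ
end

section
/- Let X be an instance space, Y a label space, U a perturbation set with x ∈ U(x) for every x, and h : X → Y a classifier. Then: (i) Rob_{U⁻¹(U)}(h) ⊆ {x : ∀ z ∈ U(x), G_h(z) = some h(x)}; and (ii) for every x ∈ X and every z ∈ U(x), either G_h(z) = some h(x) or G_h(z) = ⊥. -/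
open MeasureTheory

/-- Deterministic core of Lemma 2: (i) on the robust region of `h` w.r.t. `U⁻¹(U)`, the
selective classifier `G_h` predicts `h(x)` on every perturbation `z ∈ U(x)`; and (ii) on any
perturbation `z ∈ U(x)`, `G_h` either predicts `h(x)` or abstains. -/
theorem selective_classifier_pointwise
    {X Y : Type*} [Nonempty X] [Nonempty Y]
    (U : X → Set X) (hU : ∀ x, x ∈ U x) (h : X → Y) :
    (Rob (UinvU U) h ⊆ {x | ∀ z ∈ U x, Gsel U h z = some (h x)}) ∧
    (∀ x : X, ∀ z ∈ U x, Gsel U h z = some (h x) ∨ Gsel U h z = none) := by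
  constructor
  · intro x hx z hz
    have hall : ∀ x', z ∈ U x' → h x' = h x := fun x' hz' => hx x' ⟨z, hz, hz'⟩
    have hex : ∃ y : Y, ∀ x', z ∈ U x' → h x' = y := ⟨h x, hall⟩
    simp only [Gsel, dif_pos hex]
    exact congrArg some (hex.choose_spec x hz).symm
  · intro x z hz
    by_cases hex : ∃ y : Y, ∀ x', z ∈ U x' → h x' = y
    · left
      simp only [Gsel, dif_pos hex]
      exact congrArg some (hex.choose_spec x hz).symm
    · right
      simp only [Gsel, dif_neg hex]
end

section
/- Let X be an instance space, Y a label space, U a perturbation set with x ∈ U(x) for every x, h : X → Y a classifier, and c : X → Y a target concept. Then {x : ∃ z ∈ U(x), G_h(z) ≠ ⊥ ∧ G_h(z) ≠ c(x)} ⊆ {x : h(x) ≠ c(x)}; i.e., if the selective classifier G_h makes a non-abstaining prediction on some perturbation z ∈ U(x) that differs from c(x), then h itself errs on the natural example x. -/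
open MeasureTheory

/-- If the selective classifier `G_h` makes a non-abstaining prediction on some perturbation
`z ∈ U(x)` that differs from `c(x)`, then `h` itself errs on the natural example `x`. -/
theorem selective_classifier_error_subset
    {X Y : Type*} [Nonempty X] [Nonempty Y]
    (U : X → Set X) (hU : ∀ x, x ∈ U x) (h c : X → Y) :
    {x | ∃ z ∈ U x, Gsel U h z ≠ none ∧ Gsel U h z ≠ some (c x)} ⊆ {x | h x ≠ c x} := by
  intro x hx
  obtain ⟨z, hz, hne, hnc⟩ := hx
  unfold Gsel at hne hnc
  by_cases hp : ∃ y : Y, ∀ x', z ∈ U x' → h x' = y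
  · simp only [dif_pos hp] at hnc
    have hx' := hp.choose_spec x hz
    intro hc
    exact hnc (by rw [← hx', hc])
  · simp [dif_neg hp] at hne
end

section
/- Let D be a probability measure on a measurable instance space X, c : X → {−1,+1} a concept, U a perturbation set with x ∈ U(x) for every x, ε ∈ (0, 1/4), and ĥ : X → {−1,+1} a predictor with robust risk R_U(ĥ; D, c) = D{x : ∃ z ∈ U(x), ĥ(z) ≠ c(x)} ≤ ε. For y ∈ {−1,+1}, define g_y : X → {−1,+1} by g_y(x) = y if x ∈ ⋃_{x̃ ∈ Rob_U(ĥ), ĥ(x̃) = y} U⁻¹(U)(x̃), and g_y(x) = −y otherwise. Then D{x : g_y(x) ≠ c(x)} ≤ 2ε, and D(Rob_{U⁻¹(U)}(g_y)) ≥ (1−ε)·D({x : ĥ(x) = y} | Rob_U(ĥ)), where the conditional probability is well defined since D(Rob_U(ĥ)) ≥ 1−ε > 0. -/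
/-!
Off the robust-risk set `B = {x | ∃ z ∈ U x, ĥ z ≠ c x}`, `ĥ` is `U`-robust and agrees with `c`.
Such a point `x` lies in the `U⁻¹(U)`-expansion of its own robust `y`-region when `c x = y`;
when `c x ≠ y` it cannot lie in that expansion, since a shared perturbation `z` would force
`c x = ĥ z = y`. Hence `g_y` errs only on `B`. Moreover `g_y ≡ y` on `U⁻¹(U)(x)` for every
robust `x` with `ĥ x = y`, so that region lies in `Rob_{U⁻¹(U)}(g_y)`, and
`D(Rob_U ĥ) ≥ 1 - ε` turns its mass into the conditional bound.
-/

open MeasureTheory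

/- The expanded predictor `g_y`: predicts `y` on the `U⁻¹(U)`-expansion of the part of the
robust region of `ĥ` where `ĥ` predicts `y`, and `-y` elsewhere. Binary labels are formalized
as `ℤˣ = {−1, +1}`. -/
open Classical in
noncomputable def gExpand {X : Type*} (U : X → Set X) (hh : X → ℤˣ) (y : ℤˣ) (x : X) : ℤˣ :=
  if x ∈ ⋃ x' ∈ {x' | x' ∈ Rob U hh ∧ hh x' = y}, UinvU U x' then y else -y

section Expansion

variable {X : Type*} {U : X → Set X} {hh : X → ℤˣ} {y : ℤˣ} {x : X}

lemma self_mem_UinvU (hU : ∀ x, x ∈ U x) (x : X) : x ∈ UinvU U x :=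
  ⟨x, hU x, hU x⟩

lemma gExpand_of_mem (h : x ∈ ⋃ x' ∈ {x' | x' ∈ Rob U hh ∧ hh x' = y}, UinvU U x') :
    gExpand U hh y x = y := by
  classical
  exact if_pos h

lemma gExpand_of_notMem (h : x ∉ ⋃ x' ∈ {x' | x' ∈ Rob U hh ∧ hh x' = y}, UinvU U x') :
    gExpand U hh y x = -y := by
  classical
  exact if_neg h

lemma gExpand_eq_of_mem_UinvU {x' : X} (hx'U : x' ∈ Rob U hh) (hx'y : hh x' = y)
    (hx : x ∈ UinvU U x') : gExpand U hh y x = y :=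
  gExpand_of_mem (Set.mem_biUnion (x := x') ⟨hx'U, hx'y⟩ hx)

lemma compl_setOf_exists_ne_subset_Rob_inter {Y : Type*} {h c : X → Y} (hU : ∀ x, x ∈ U x) :
    {x | ∃ z ∈ U x, h z ≠ c x}ᶜ ⊆ Rob U h ∩ {x | h x = c x} := by
  intro x hx
  simp only [Set.mem_compl_iff, Set.mem_ofPred_eq, not_exists, not_and, not_not] at hx
  exact ⟨fun z hz ↦ (hx z hz).trans (hx x (hU x)).symm, hx x (hU x)⟩

lemma setOf_gExpand_ne_subset (hU : ∀ x, x ∈ U x) (c : X → ℤˣ) :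
    {x | gExpand U hh y x ≠ c x} ⊆ {x | ∃ z ∈ U x, hh z ≠ c x} := by
  intro x hx
  by_contra hxB
  obtain ⟨hxU, hxc⟩ := compl_setOf_exists_ne_subset_Rob_inter hU hxB
  have hagree : ∀ z ∈ U x, hh z = c x := fun z hz ↦ (hxU z hz).trans hxc
  apply hx
  by_cases hcy : c x = y
  · exact (gExpand_eq_of_mem_UinvU hxU (hxc.trans hcy) (self_mem_UinvU hU x)).trans hcy.symm
  · rw [gExpand_of_notMem]
    · exact (Int.units_ne_iff_eq_neg.1 hcy).symm
    intro hmem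
    obtain ⟨x', ⟨hx'U, hx'y⟩, z, hzx', hzx⟩ := Set.mem_iUnion₂.1 hmem
    exact hcy ((hagree z hzx).symm.trans ((hx'U z hzx').trans hx'y))

lemma inter_Rob_subset_Rob_gExpand (hU : ∀ x, x ∈ U x) :
    {x | hh x = y} ∩ Rob U hh ⊆ Rob (UinvU U) (gExpand U hh y) := by
  rintro x ⟨hxy, hxU⟩ x' hx'
  rw [gExpand_eq_of_mem_UinvU hxU hxy hx', gExpand_eq_of_mem_UinvU hxU hxy (self_mem_UinvU hU x)]

end Expansion

lemma MeasureTheory.ofReal_one_sub_le_measure {α : Type*} [MeasurableSpace α] {μ : Measure α}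
    [IsProbabilityMeasure μ] {s : Set α} {ε : ℝ} (hε : 0 ≤ ε) (hs : μ sᶜ ≤ ENNReal.ofReal ε) :
    ENNReal.ofReal (1 - ε) ≤ μ s := by
  rw [ENNReal.ofReal_sub _ hε, ENNReal.ofReal_one, tsub_le_iff_right]
  calc 1 = μ Set.univ := measure_univ.symm
    _ ≤ μ s + μ sᶜ := measure_univ_le_add_compl s
    _ ≤ μ s + ENNReal.ofReal ε := by gcongr

theorem expansion_lemma_general
    {X : Type*} [MeasurableSpace X]
    (D : Measure X) [IsProbabilityMeasure D]
    (U : X → Set X) (hU : ∀ x, x ∈ U x) (c : X → ℤˣ)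
    (ε : ℝ) (hε0 : 0 < ε)
    (hh : X → ℤˣ) (hrisk : D {x | ∃ z ∈ U x, hh z ≠ c x} ≤ ENNReal.ofReal ε)
    (y : ℤˣ) :
    D {x | gExpand U hh y x ≠ c x} ≤ ENNReal.ofReal (2 * ε) ∧
    ENNReal.ofReal (1 - ε) * (D ({x | hh x = y} ∩ Rob U hh) / D (Rob U hh)) ≤
      D (Rob (UinvU U) (gExpand U hh y)) := by
  have hRob : ENNReal.ofReal (1 - ε) ≤ D (Rob U hh) :=
    ofReal_one_sub_le_measure hε0.le <| (measure_mono <| Set.compl_subset_comm.1 <|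
      (compl_setOf_exists_ne_subset_Rob_inter hU).trans Set.inter_subset_left).trans hrisk
  constructor
  · calc D {x | gExpand U hh y x ≠ c x} ≤ D {x | ∃ z ∈ U x, hh z ≠ c x} :=
          measure_mono (setOf_gExpand_ne_subset hU c)
      _ ≤ ENNReal.ofReal (2 * ε) := hrisk.trans (ENNReal.ofReal_le_ofReal (by linarith))
  · calc ENNReal.ofReal (1 - ε) * (D ({x | hh x = y} ∩ Rob U hh) / D (Rob U hh))
        ≤ D (Rob U hh) * (D ({x | hh x = y} ∩ Rob U hh) / D (Rob U hh)) := by gcongr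
      _ ≤ D ({x | hh x = y} ∩ Rob U hh) := ENNReal.mul_div_le
      _ ≤ D (Rob (UinvU U) (gExpand U hh y)) := measure_mono (inter_Rob_subset_Rob_gExpand hU)

/-- **Lemma 5**: if `ĥ` has robust risk at most `ε < 1/4` w.r.t. `U`, then for each label
`y ∈ {−1,+1}` the expanded predictor `g_y` has natural error at most `2ε` and is robust
w.r.t. `U⁻¹(U)` on a region of mass at least `(1−ε)·D(ĥ = y | Rob_U(ĥ))`. -/
theorem expansion_lemma
    {X : Type*} [MeasurableSpace X] [Nonempty X]
    (D : Measure X) [IsProbabilityMeasure D]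
    (U : X → Set X) (hU : ∀ x, x ∈ U x) (c : X → ℤˣ)
    (ε : ℝ) (hε0 : 0 < ε) (hε1 : ε < 1/4)
    (hh : X → ℤˣ) (hrisk : D {x | ∃ z ∈ U x, hh z ≠ c x} ≤ ENNReal.ofReal ε)
    (y : ℤˣ) :
    D {x | gExpand U hh y x ≠ c x} ≤ ENNReal.ofReal (2 * ε) ∧
    ENNReal.ofReal (1 - ε) * (D ({x | hh x = y} ∩ Rob U hh) / D (Rob U hh)) ≤
      D (Rob (UinvU U) (gExpand U hh y)) :=
  expansion_lemma_general D U hU c ε hε0 hh hrisk y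
end

section
/- Let X be an instance space, U a perturbation set with x ∈ U(x) for every x, ĥ : X → {−1,+1} a predictor, and for y ∈ {−1,+1} define g_y : X → {−1,+1} by g_y(x) = y if x ∈ ⋃_{x̃ ∈ Rob_U(ĥ), ĥ(x̃) = y} U⁻¹(U)(x̃), and g_y(x) = −y otherwise. Then: (i) g_y(x) = ĥ(x) for every x ∈ Rob_U(ĥ); and (ii) Rob_U(ĥ) ∩ {x : ĥ(x) = y} ⊆ Rob_{U⁻¹(U)}(g_y). -/
/-- Deterministic core of Lemma 5: (i) `g_y` agrees with `ĥ` on the robust region of `ĥ`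
w.r.t. `U`; and (ii) `g_y` is robust w.r.t. `U⁻¹(U)` on the part of that robust region where
`ĥ` predicts `y`. -/
theorem expansion_pointwise
    {X : Type*} [Nonempty X]
    (U : X → Set X) (hU : ∀ x, x ∈ U x) (hh : X → ℤˣ) (y : ℤˣ) :
    (∀ x ∈ Rob U hh, gExpand U hh y x = hh x) ∧
    (Rob U hh ∩ {x | hh x = y} ⊆ Rob (UinvU U) (gExpand U hh y)) := by
  have hmem : ∀ x, x ∈ Rob U hh → hh x = y →
      x ∈ ⋃ x' ∈ {x' | x' ∈ Rob U hh ∧ hh x' = y}, UinvU U x' := by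
    intro x hx hxy
    exact Set.mem_biUnion ⟨hx, hxy⟩ ⟨x, hU x, hU x⟩
  have hval : ∀ x, x ∈ Rob U hh → hh x = y → gExpand U hh y x = y := by
    intro x hx hxy
    simp only [gExpand, if_pos (hmem x hx hxy)]
  constructor
  · intro x hx
    by_cases hxy : hh x = y
    · rw [hval x hx hxy, hxy]
    · have hnot : x ∉ ⋃ x' ∈ {x' | x' ∈ Rob U hh ∧ hh x' = y}, UinvU U x' := by
        intro hmemx
        rcases Set.mem_iUnion₂.1 hmemx with ⟨x', ⟨hx', hx'y⟩, z, hz1, hz2⟩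
        exact hxy ((hx z hz2).symm.trans ((hx' z hz1).trans hx'y))
      have : hh x = -y := by
        rcases Int.units_eq_one_or (hh x) with h | h <;>
          rcases Int.units_eq_one_or y with h' | h' <;> simp_all
      rw [gExpand, if_neg hnot, this]
  · rintro x ⟨hx, hxy⟩ z hz
    rw [hval x hx hxy]
    rcases hz with ⟨w, hw1, hw2⟩
    have : z ∈ ⋃ x' ∈ {x' | x' ∈ Rob U hh ∧ hh x' = y}, UinvU U x' :=
      Set.mem_biUnion ⟨hx, hxy⟩ ⟨w, hw1, hw2⟩
    simp only [gExpand, if_pos this]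
end

section
/- Let X = ℕ × {−1, 0, +1} with points x_n^+ = (n,+1), x_n^- = (n,−1), z_n = (n,0); let U(x_n^+) = {x_n^+, z_n}, U(x_n^-) = {x_n^-, z_n}, U(z_n) = {z_n, x_n^+, x_n^-}; and for y : ℕ → {−1,+1} let h_y : X → {−1,+1} be given by h_y(x_n^+) = +1, h_y(x_n^-) = −1, h_y(z_n) = y(n), with C = {h_y : y ∈ {−1,+1}^ℕ}. Then: (a) letting μ be the i.i.d. uniform product measure on {−1,+1}^ℕ, for every y ∈ {−1,+1}^ℕ and every probability measure D on X robustly realizable by h_y w.r.t. U, every ỹ ∈ {−1,+1}^ℕ satisfies D{x : h_ỹ(x) ≠ h_y(x)} = 0, and ∫ D(Rob_U(h_ỹ)) dμ(ỹ) = 1/2; and (b) for every ε ∈ (0, 1/2), δ ∈ (0, 1/2), m ∈ ℕ, and every learner B with sample complexity m, there exist y ∈ {−1,+1}^ℕ and a probability measure D on X robustly realizable by h_y w.r.t. U such that with probability strictly greater than δ over S ~ D_{h_y}^m, R_U(B(S); D, h_y) > ε. In particular, C is barely robustly learnable with respect to U (with β = 1/2 and zero natural error, in expectation over the learner's randomness)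 but not (ε,δ)-robustly-learnable with respect to U for any ε < 1/2. -/
/-!
(a) Every `z_n` is non-robust for every `h_y`, because `h_y(x_n^+) ≠ h_y(x_n^-)`; so a
realizable `D` gives no mass to the `z_n`, and all `h_{y'}` agree `D`-a.s. A point `x_n^±` is
robust for `h_{y'}` exactly when `y'(n) = ±1`, an event of `μ`-probability `1/2`, so by Tonelli
the expected robust mass is `1/2`.

(b) Take `k` with `m < (1 - 2ε) k` and, for `v ∈ {±1}^k`, let `D_v` be uniform on the points
`x_i^{v_i}`, `i < k`, which are robust for `h_y` whenever `y` extends `v`. Since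
`z_i ∈ U(x_i^{v_i})`, the robust risk of `ĥ` is at least the fraction of `i` with
`ĥ(z_i) ≠ v_i`. A sample with indices `J` (`|J| ≤ m`) is unchanged when `v` is flipped outside
`J`, so `ĥ` errs at each `z_i`, `i ∉ J`, for `v` or for its flip; hence for every sample at least
half of the `v` suffer robust risk `≥ (k - m) / (2k) > ε`, and averaging gives a `v` whose
failure probability is `≥ 1/2 > δ`.
-/

open MeasureTheory

instance : MeasurableSpace SignType := ⊤
instance : MeasurableSpace ℤˣ := ⊤

/-- The instance space `X = ℕ × {−1, 0, +1}`, with second coordinate formalized by `SignType`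
(`.neg ↔ −1`, `.zero ↔ 0`, `.pos ↔ +1`). Binary labels are formalized as `ℤˣ = {−1,+1}`. -/
abbrev Xsp : Type := ℕ × SignType

/-- `x_n^+ = (n, +1)`. -/
def xp (n : ℕ) : Xsp := (n, SignType.pos)

/-- `x_n^- = (n, −1)`. -/
def xm (n : ℕ) : Xsp := (n, SignType.neg)

/-- `z_n = (n, 0)`. -/
def zz (n : ℕ) : Xsp := (n, SignType.zero)

/-- The perturbation set: `U(x_n^±) = {x_n^±, z_n}` and `U(z_n) = {z_n, x_n^+, x_n^-}`. -/
def Upert : Xsp → Set Xsp := fun p =>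
  match p with
  | (n, SignType.pos) => {xp n, zz n}
  | (n, SignType.neg) => {xm n, zz n}
  | (n, SignType.zero) => {zz n, xp n, xm n}

/-- The concept `h_y` for `y : ℕ → ℤˣ`: `h_y(x_n^+) = +1`, `h_y(x_n^-) = −1`,
`h_y(z_n) = y(n)`. -/
def hy (y : ℕ → ℤˣ) : Xsp → ℤˣ := fun p =>
  match p with
  | (_, SignType.pos) => 1
  | (_, SignType.neg) => -1
  | (n, SignType.zero) => y n

/-- `x_n^{u}` for a sign `u : ℤˣ`: `x_n^{+1} = x_n^+` and `x_n^{−1} = x_n^-`. -/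
def xpt (n : ℕ) (u : ℤˣ) : Xsp := if u = 1 then xp n else xm n

instance : DiscreteMeasurableSpace SignType := ⟨fun _ => MeasurableSpace.measurableSet_top⟩
instance : DiscreteMeasurableSpace ℤˣ := ⟨fun _ => MeasurableSpace.measurableSet_top⟩

open Finset ProbabilityTheory

lemma setOf_exists_ne_eq_compl_Rob {X Y : Type*} (V : X → Set X) (h : X → Y) :
    {x | ∃ z ∈ V x, h z ≠ h x} = (Rob V h)ᶜ := by
  ext x
  simp [Rob]

lemma lintegral_measure_eq_lintegral_measure_setOf_mem {α β : Type*} [MeasurableSpace α]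
    [Countable α] [MeasurableSingletonClass α] [MeasurableSpace β] (D : Measure α)
    (μ : Measure β) (W : β → Set α) (hW : ∀ x, MeasurableSet {b | x ∈ W b}) :
    ∫⁻ b, D (W b) ∂μ = ∫⁻ x, μ {b | x ∈ W b} ∂D := by
  have hD : ∀ b, D (W b) = ∑' x, {b | x ∈ W b}.indicator 1 b * D {x} := fun b => by
    rw [← lintegral_indicator_one (Set.to_countable _).measurableSet, lintegral_countable']
    rfl
  simp_rw [hD, lintegral_countable' (μ := D)]
  rw [lintegral_tsum fun x => ((measurable_one.indicator (hW x)).mul_const _).aemeasurable]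
  simp_rw [lintegral_mul_const _ (measurable_one.indicator (hW _)),
    lintegral_indicator_one (hW _)]

lemma card_le_two_mul_card_filter_of_injective {α : Type*} [Fintype α] {p : α → Prop}
    [DecidablePred p] {σ : α → α} (hσ : σ.Injective) (h : ∀ a, ¬ p a → p (σ a)) :
    Fintype.card α ≤ 2 * #{a | p a} := by
  have hle : #{a | ¬ p a} ≤ #{a | p a} :=
    card_le_card_of_injOn σ (fun a ha => by simp_all) hσ.injOn
  have := card_filter_add_card_filter_not (s := univ) (fun a => p a)
  rw [card_univ] at this
  omega

section FlipOutside

variable {ι : Type*} [DecidableEq ι]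

def flipOutside (J : Finset ι) (v : ι → ℤˣ) : ι → ℤˣ :=
  fun i => if i ∈ J then v i else -v i

lemma flipOutside_involutive (J : Finset ι) : (flipOutside J).Involutive := by
  intro v; funext i; by_cases h : i ∈ J <;> simp [flipOutside, h]

variable [Fintype ι]

lemma card_compl_le_card_ne_add_card_ne_flipOutside (J : Finset ι) (g v : ι → ℤˣ) :
    #Jᶜ ≤ #{i | g i ≠ v i} + #{i | g i ≠ flipOutside J v i} := by
  refine (card_le_card fun i hi => ?_).trans (card_union_le _ _)
  have hflip : flipOutside J v i = -v i := by simp_all [flipOutside]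
  rcases Int.units_eq_one_or (v i) with h | h <;> rcases Int.units_eq_one_or (g i) with h' | h' <;>
    simp_all

lemma card_le_two_mul_card_filter_card_compl_le (J : Finset ι) (f : (ι → ℤˣ) → ι → ℤˣ)
    (hf : ∀ v w, (∀ i ∈ J, v i = w i) → f v = f w) :
    Fintype.card (ι → ℤˣ) ≤ 2 * #{v | #Jᶜ ≤ 2 * #{i | f v i ≠ v i}} := by
  refine card_le_two_mul_card_filter_of_injective (flipOutside_involutive J).injective
    fun v hv => ?_
  have hfv : f (flipOutside J v) = f v := hf _ _ fun i hi => by simp [flipOutside, hi]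
  have := card_compl_le_card_ne_add_card_ne_flipOutside J (f v) v
  rw [hfv]
  omega

end FlipOutside

lemma exists_inv_two_le_measure_of_card_le_two_mul {Ω V : Type*} [MeasurableSpace Ω]
    [Fintype V] [Nonempty V] (P : Measure Ω) [IsProbabilityMeasure P] {p : V → Ω → Prop}
    [∀ ω, DecidablePred fun v => p v ω] (hp : ∀ v, MeasurableSet {ω | p v ω})
    (hcover : ∀ ω, Fintype.card V ≤ 2 * #{v | p v ω}) :
    ∃ v, 2⁻¹ ≤ P {ω | p v ω} := by
  by_contra! hlt
  have hsum : ∑ v, P {ω | p v ω} = ∫⁻ ω, ∑ v, {ω | p v ω}.indicator 1 ω ∂P := by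
    rw [lintegral_finsetSum _ fun v _ => measurable_one.indicator (hp v)]
    simp_rw [lintegral_indicator_one (hp _)]
  have hpoint : ∀ ω, (Fintype.card V : ENNReal) * 2⁻¹ ≤ ∑ v, {ω | p v ω}.indicator 1 ω := by
    intro ω
    simp only [Set.indicator_apply, Set.mem_ofPred_eq, Pi.one_apply, sum_boole,
      ← div_eq_mul_inv]
    exact ENNReal.div_le_of_le_mul (mod_cast (hcover ω).trans_eq (mul_comm _ _))
  have := calc (Fintype.card V : ENNReal) * 2⁻¹
      = ∫⁻ _, (Fintype.card V : ENNReal) * 2⁻¹ ∂P := by simp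
    _ ≤ ∑ v, P {ω | p v ω} := hsum ▸ lintegral_mono hpoint
    _ < ∑ _v : V, 2⁻¹ := ENNReal.sum_lt_sum_of_nonempty univ_nonempty fun v _ => hlt v
    _ = (Fintype.card V : ENNReal) * 2⁻¹ := by simp
  exact this.false

lemma exists_nat_two_mul_mul_add_lt {ε : ℝ} (hε : ε < 1 / 2) (m : ℕ) :
    ∃ k : ℕ, 0 < k ∧ 2 * ε * k + m < k := by
  obtain ⟨k, hk⟩ := exists_nat_gt ((m : ℝ) / (1 - 2 * ε))
  have h2ε : 0 < 1 - 2 * ε := by linarith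
  have hk0 : (0 : ℝ) < k := (div_nonneg m.cast_nonneg h2ε.le).trans_lt hk
  refine ⟨k, mod_cast hk0, ?_⟩
  rw [div_lt_iff₀ h2ε] at hk
  linarith

lemma ofReal_lt_natCast_div {ε : ℝ} {k m c : ℕ} (hε : 0 ≤ ε) (hkε : 2 * ε * k + m < k)
    (hc : k ≤ 2 * c + m) : ENNReal.ofReal ε < c / k := by
  have hk : (0 : ℝ) < k := by nlinarith
  have hc' : (k : ℝ) ≤ 2 * c + m := by exact_mod_cast hc
  have hεc : ε < c / k := by rw [lt_div_iff₀ hk]; linarith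
  rw [← ENNReal.ofReal_natCast c, ← ENNReal.ofReal_natCast k, ← ENNReal.ofReal_div_of_pos hk]
  exact (ENNReal.ofReal_lt_ofReal_iff_of_nonneg hε).2 hεc

@[simp] lemma hy_xp (y : ℕ → ℤˣ) (n : ℕ) : hy y (xp n) = 1 := rfl
@[simp] lemma hy_xm (y : ℕ → ℤˣ) (n : ℕ) : hy y (xm n) = -1 := rfl
@[simp] lemma hy_zz (y : ℕ → ℤˣ) (n : ℕ) : hy y (zz n) = y n := rfl
@[simp] lemma Upert_xp (n : ℕ) : Upert (xp n) = {xp n, zz n} := rfl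
@[simp] lemma Upert_xm (n : ℕ) : Upert (xm n) = {xm n, zz n} := rfl
@[simp] lemma Upert_zz (n : ℕ) : Upert (zz n) = {zz n, xp n, xm n} := rfl

lemma hy_xpt (y : ℕ → ℤˣ) (n : ℕ) (u : ℤˣ) : hy y (xpt n u) = u := by
  rcases Int.units_eq_one_or u with rfl | rfl <;> rfl

@[simp] lemma xpt_fst (n : ℕ) (u : ℤˣ) : (xpt n u).1 = n := by
  unfold xpt; split_ifs <;> rfl

lemma xpt_snd_ne_zero (n : ℕ) (u : ℤˣ) : (xpt n u).2 ≠ 0 := by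
  unfold xpt; split_ifs <;> simp [xp, xm]

lemma xpt_injective (n : ℕ) : Function.Injective (xpt n) := by
  intro u u' h
  rcases Int.units_eq_one_or u with rfl | rfl <;> rcases Int.units_eq_one_or u' with rfl | rfl
  all_goals first | rfl | simp [xpt, xp, xm] at h

lemma exists_xpt_eq {x : Xsp} (hx : x.2 ≠ 0) : ∃ u, x = xpt x.1 u := by
  obtain ⟨n, s | s | s⟩ := x
  · exact absurd rfl hx
  · exact ⟨-1, by simp [xpt, xm]⟩
  · exact ⟨1, rfl⟩

lemma zz_mem_Upert_xpt (n : ℕ) (u : ℤˣ) : zz n ∈ Upert (xpt n u) := by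
  unfold xpt; split_ifs <;> simp

lemma mem_Rob_hy_iff {y : ℕ → ℤˣ} {x : Xsp} :
    x ∈ Rob Upert (hy y) ↔ x = xpt x.1 (y x.1) := by
  obtain ⟨n, s | s | s⟩ := x
  all_goals
    first
      | change zz n ∈ _ ↔ zz n = _
      | change xm n ∈ _ ↔ xm n = _
      | change xp n ∈ _ ↔ xp n = _
    simp only [Rob, Set.mem_ofPred_eq, Upert_zz, Upert_xm, Upert_xp, Set.forall_mem_insert,
      Set.mem_singleton_iff, forall_eq, hy_xp, hy_xm, hy_zz]
    rcases Int.units_eq_one_or (y n) with h | h <;> simp [xpt, zz, xp, xm, h]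

lemma xpt_mem_Rob_hy (y : ℕ → ℤˣ) (n : ℕ) : xpt n (y n) ∈ Rob Upert (hy y) :=
  mem_Rob_hy_iff.2 (by rw [xpt_fst])

lemma notMem_Rob_hy {y : ℕ → ℤˣ} {x : Xsp} (hx : x.2 = 0) : x ∉ Rob Upert (hy y) := by
  rw [mem_Rob_hy_iff]
  intro h
  exact xpt_snd_ne_zero _ _ (h ▸ hx)

lemma measurableSet_setOf_mem_Rob_hy (x : Xsp) :
    MeasurableSet {y : ℕ → ℤˣ | x ∈ Rob Upert (hy y)} := by
  simp_rw [mem_Rob_hy_iff, eq_comm (a := x)]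
  exact (Measurable.of_discrete (f := xpt x.1) |>.comp (measurable_pi_apply x.1))
    (measurableSet_singleton x)

lemma measure_setOf_mem_Rob_hy {μ : Measure (ℕ → ℤˣ)} (hμ : ∀ n u, μ {y | y n = u} = 2⁻¹)
    (x : Xsp) :
    μ {y | x ∈ Rob Upert (hy y)} = {x : Xsp | x.2 = 0}ᶜ.indicator (fun _ => 2⁻¹) x := by
  by_cases hx : x.2 = 0
  · rw [Set.indicator_of_notMem (by simpa using hx)]
    simp [notMem_Rob_hy hx]
  · obtain ⟨u, hu⟩ := exists_xpt_eq hx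
    rw [Set.indicator_of_mem hx, hu]
    simp_rw [mem_Rob_hy_iff, xpt_fst, (xpt_injective _).eq_iff, eq_comm (a := u)]
    exact hμ x.1 u

lemma measure_setOf_snd_eq_zero_eq_zero {y : ℕ → ℤˣ} {D : Measure Xsp}
    (hD : D (Rob Upert (hy y))ᶜ = 0) : D {x | x.2 = 0} = 0 :=
  measure_mono_null (fun _ hx => notMem_Rob_hy hx) hD

lemma measure_hy_ne_hy_eq_zero {y : ℕ → ℤˣ} {D : Measure Xsp} (hD : D (Rob Upert (hy y))ᶜ = 0)
    (y' : ℕ → ℤˣ) : D {x | hy y' x ≠ hy y x} = 0 := by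
  refine measure_mono_null ?_ (measure_setOf_snd_eq_zero_eq_zero hD)
  rintro ⟨n, s | s | s⟩ hx
  exacts [rfl, absurd rfl hx, absurd rfl hx]

lemma lintegral_measure_Rob_hy {μ : Measure (ℕ → ℤˣ)} (hμ : ∀ n u, μ {y | y n = u} = 2⁻¹)
    {y : ℕ → ℤˣ} {D : Measure Xsp} [IsProbabilityMeasure D] (hD : D (Rob Upert (hy y))ᶜ = 0) :
    ∫⁻ y', D (Rob Upert (hy y')) ∂μ = 1 / 2 := by
  rw [lintegral_measure_eq_lintegral_measure_setOf_mem _ _ _ measurableSet_setOf_mem_Rob_hy]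
  simp_rw [measure_setOf_mem_Rob_hy hμ]
  rw [lintegral_indicator_const MeasurableSet.of_discrete,
    prob_compl_eq_one_sub MeasurableSet.of_discrete, measure_setOf_snd_eq_zero_eq_zero hD,
    tsub_zero, mul_one, one_div]

section HardDistribution

variable {k : ℕ}

def yOfFin (v : Fin k → ℤˣ) : ℕ → ℤˣ := fun n => if h : n < k then v ⟨n, h⟩ else 1

@[simp] lemma yOfFin_apply (v : Fin k → ℤˣ) (i : Fin k) : yOfFin v i = v i := by
  simp [yOfFin]

noncomputable def hardDist (v : Fin k → ℤˣ) : Measure Xsp :=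
  (uniformOn Set.univ : Measure (Fin k)).map fun i : Fin k => xpt i (v i)

instance [NeZero k] (v : Fin k → ℤˣ) : IsProbabilityMeasure (hardDist v) :=
  Measure.isProbabilityMeasure_map Measurable.of_discrete.aemeasurable

lemma hardDist_apply (v : Fin k → ℤˣ) (s : Set Xsp)
    [DecidablePred fun i : Fin k => xpt i (v i) ∈ s] :
    hardDist v s = #{i : Fin k | xpt i (v i) ∈ s} / k := by
  rw [hardDist, Measure.map_apply Measurable.of_discrete MeasurableSet.of_discrete,
    uniformOn_univ, Fintype.card_fin, ← Measure.count_apply_finset]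
  congr 2
  ext; simp

lemma hardDist_compl_Rob (v : Fin k → ℤˣ) : hardDist v (Rob Upert (hy (yOfFin v)))ᶜ = 0 := by
  classical
  rw [hardDist_apply, filter_false_of_mem fun i _ => ?_, card_empty, Nat.cast_zero,
    ENNReal.zero_div]
  simpa using xpt_mem_Rob_hy (yOfFin v) i

lemma card_ne_div_le_hardDist (v : Fin k → ℤˣ) (h : Xsp → ℤˣ) :
    (#{i : Fin k | h (zz i) ≠ v i} : ENNReal) / k ≤
      hardDist v {x | ∃ z ∈ Upert x, h z ≠ hy (yOfFin v) x} := by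
  classical
  rw [hardDist_apply]
  gcongr with i _
  intro hi
  exact ⟨zz i, zz_mem_Upert_xpt _ _, by rwa [hy_xpt]⟩

def hardSample {m : ℕ} (is : Fin m → Fin k) (v : Fin k → ℤˣ) : Fin m → Xsp × ℤˣ :=
  fun j => (xpt (is j) (v (is j)), v (is j))

lemma pi_hardDist_setOf {m : ℕ} (v : Fin k → ℤˣ) (p : (Fin m → Xsp × ℤˣ) → Prop) :
    Measure.pi (fun _ : Fin m => hardDist v) {xs | p fun j => (xs j, hy (yOfFin v) (xs j))} =
      Measure.pi (fun _ => uniformOn Set.univ) {is | p (hardSample is v)} := by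
  rw [hardDist, ← Measure.pi_map_pi fun _ => Measurable.of_discrete.aemeasurable,
    Measure.map_apply Measurable.of_discrete MeasurableSet.of_discrete]
  congr 1
  ext is
  simp only [Set.mem_preimage, Set.mem_ofPred_eq, hy_xpt]
  rfl

lemma card_le_two_mul_card_ofReal_lt_hardDist {ε : ℝ} {m : ℕ} (hε : 0 ≤ ε)
    (hkε : 2 * ε * k + m < k) (B : (Fin m → Xsp × ℤˣ) → Xsp → ℤˣ) (is : Fin m → Fin k) :
    Fintype.card (Fin k → ℤˣ) ≤ 2 * #{v | ENNReal.ofReal ε <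
      hardDist v {x | ∃ z ∈ Upert x, B (hardSample is v) z ≠ hy (yOfFin v) x}} := by
  set J := univ.image is
  have hJ : #J ≤ m := card_image_le.trans (by simp)
  refine (card_le_two_mul_card_filter_card_compl_le J (fun v i => B (hardSample is v) (zz i))
    fun v w hvw => ?_).trans ?_
  · have : hardSample is v = hardSample is w := by
      funext j
      simp [hardSample, hvw (is j) (mem_image_of_mem is (mem_univ j))]
    rw [this]
  · gcongr with v _
    intro hv
    refine (ofReal_lt_natCast_div hε hkε ?_).trans_le (card_ne_div_le_hardDist v _)
    rw [card_compl, Fintype.card_fin] at hv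
    omega

end HardDistribution

theorem barely_robust_not_strongly_robust_general
    (μ : Measure (ℕ → ℤˣ))
    (hμ : ∀ (s : Finset ℕ) (v : ℕ → ℤˣ),
      μ {y' | ∀ n ∈ s, y' n = v n} = (2 : ENNReal)⁻¹ ^ s.card) :
    -- (a) barely robust learnability with zero natural error, in expectation over y' ~ μ
    (∀ y : ℕ → ℤˣ, ∀ D : Measure Xsp, IsProbabilityMeasure D →
      D {x | ∃ z ∈ Upert x, hy y z ≠ hy y x} = 0 →
      (∀ y' : ℕ → ℤˣ, D {x | hy y' x ≠ hy y x} = 0) ∧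
      ∫⁻ y', D (Rob Upert (hy y')) ∂μ = 1 / 2) ∧
    -- (b) no learner (ε,δ)-robustly-learns the class for ε < 1/2
    (∀ ε δ : ℝ, 0 < ε → ε < 1 / 2 → 0 < δ → δ < 1 / 2 →
      ∀ (m : ℕ) (B : (Fin m → Xsp × ℤˣ) → Xsp → ℤˣ),
        ∃ y : ℕ → ℤˣ, ∃ D : Measure Xsp, IsProbabilityMeasure D ∧
          D {x | ∃ z ∈ Upert x, hy y z ≠ hy y x} = 0 ∧
          ENNReal.ofReal δ <
            Measure.pi (fun _ : Fin m => D)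
              {xs | ENNReal.ofReal ε <
                D {x | ∃ z ∈ Upert x, B (fun i => (xs i, hy y (xs i))) z ≠ hy y x}}) := by
  simp_rw [setOf_exists_ne_eq_compl_Rob]
  have hcoord : ∀ n u, μ {y | y n = u} = 2⁻¹ := fun n u => by simpa using hμ {n} fun _ => u
  refine ⟨fun y D _ hD => ⟨measure_hy_ne_hy_eq_zero hD, lintegral_measure_Rob_hy hcoord hD⟩,
    fun ε δ hε hε2 _ hδ2 m B => ?_⟩
  obtain ⟨k, hk, hkε⟩ := exists_nat_two_mul_mul_add_lt hε2 m
  have : NeZero k := ⟨hk.ne'⟩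
  obtain ⟨v, hv⟩ := exists_inv_two_le_measure_of_card_le_two_mul
    (Measure.pi fun _ : Fin m => (uniformOn Set.univ : Measure (Fin k)))
    (p := fun v is => ENNReal.ofReal ε <
      hardDist v {x | ∃ z ∈ Upert x, B (hardSample is v) z ≠ hy (yOfFin v) x})
    (fun _ => MeasurableSet.of_discrete) (card_le_two_mul_card_ofReal_lt_hardDist hε.le hkε B)
  refine ⟨yOfFin v, hardDist v, inferInstance, hardDist_compl_Rob v, ?_⟩
  rw [pi_hardDist_setOf v fun S => ENNReal.ofReal ε <
    hardDist v {x | ∃ z ∈ Upert x, B S z ≠ hy (yOfFin v) x}]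
  refine lt_of_lt_of_le ?_ hv
  rw [← ENNReal.ofReal_ofNat 2, ← ENNReal.ofReal_inv_of_pos two_pos]
  exact ENNReal.ofReal_lt_ofReal_iff'.2 ⟨by linarith, by norm_num⟩

/-- **Theorem 8** (hard construction): the class `C = {h_y}` over `X = ℕ × {−1,0,+1}` is
barely robustly learnable w.r.t. `U` with `β = 1/2` and zero natural error — a uniformly
random `h_y'` makes no natural errors and is robust on half the mass in expectation — but is
not `(ε,δ)`-robustly-learnable w.r.t. `U` for any `ε < 1/2`. Here `μ` is the i.i.d. uniform
product measure on `{−1,+1}^ℕ`, characterized by its cylinder probabilities. -/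
theorem barely_robust_not_strongly_robust
    (μ : Measure (ℕ → ℤˣ)) (hμprob : IsProbabilityMeasure μ)
    (hμ : ∀ (s : Finset ℕ) (v : ℕ → ℤˣ),
      μ {y' | ∀ n ∈ s, y' n = v n} = (2 : ENNReal)⁻¹ ^ s.card) :
    -- (a) barely robust learnability with zero natural error, in expectation over y' ~ μ
    (∀ y : ℕ → ℤˣ, ∀ D : Measure Xsp, IsProbabilityMeasure D →
      D {x | ∃ z ∈ Upert x, hy y z ≠ hy y x} = 0 →
      (∀ y' : ℕ → ℤˣ, D {x | hy y' x ≠ hy y x} = 0) ∧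
      ∫⁻ y', D (Rob Upert (hy y')) ∂μ = 1 / 2) ∧
    -- (b) no learner (ε,δ)-robustly-learns the class for ε < 1/2
    (∀ ε δ : ℝ, 0 < ε → ε < 1 / 2 → 0 < δ → δ < 1 / 2 →
      ∀ (m : ℕ) (B : (Fin m → Xsp × ℤˣ) → Xsp → ℤˣ),
        ∃ y : ℕ → ℤˣ, ∃ D : Measure Xsp, IsProbabilityMeasure D ∧
          D {x | ∃ z ∈ Upert x, hy y z ≠ hy y x} = 0 ∧
          ENNReal.ofReal δ <
            Measure.pi (fun _ : Fin m => D)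
              {xs | ENNReal.ofReal ε <
                D {x | ∃ z ∈ Upert x, B (fun i => (xs i, hy y (xs i))) z ≠ hy y x}}) :=
  barely_robust_not_strongly_robust_general μ hμ
end

section
/- Let X = ℕ × {−1, 0, +1} with x_n^+ = (n,+1), x_n^- = (n,−1), z_n = (n,0); let U(x_n^+) = {x_n^+, z_n}, U(x_n^-) = {x_n^-, z_n}, U(z_n) = {z_n, x_n^+, x_n^-}; and for y : ℕ → {−1,+1} let h_y(x_n^+) = +1, h_y(x_n^-) = −1, h_y(z_n) = y(n). If a probability measure D on X satisfies D{x : ∃ z ∈ U(x), h_y(z) ≠ h_y(x)} = 0, then for every n ∈ ℕ: D({z_n}) = 0 and D({x_n^{−y(n)}}) = 0 (where x_n^{+1} = x_n^+ and x_n^{−1} = x_n^-); consequently, for every ỹ : ℕ → {−1,+1}, D{x : h_ỹ(x) ≠ h_y(x)} = 0. -/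
open MeasureTheory

/-- In the hard construction, if `D` is robustly realizable by `h_y` w.r.t. `U`, then every
`z_n` and every `x_n^{−y(n)}` has `D`-measure zero; consequently every `h_{y'}` agrees with
`h_y` `D`-almost surely on natural examples. -/
theorem construction_realizable_support
    (y : ℕ → ℤˣ) (D : Measure Xsp) (hD : IsProbabilityMeasure D)
    (hreal : D {x | ∃ z ∈ Upert x, hy y z ≠ hy y x} = 0) :
    (∀ n : ℕ, D {zz n} = 0 ∧ D {xpt n (-(y n))} = 0) ∧
    (∀ y' : ℕ → ℤˣ, D {x | hy y' x ≠ hy y x} = 0) := by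

  have key : ∀ n : ℕ, zz n ∈ {x | ∃ z ∈ Upert x, hy y z ≠ hy y x} := by
    intro n
    rcases Int.units_eq_one_or (y n) with h | h
    · exact ⟨xm n, by simp [Upert, zz, xm], by simp [hy, zz, xm, h]⟩
    · exact ⟨xp n, by simp [Upert, zz, xp], by simp [hy, zz, xp, h]⟩
  have keyx : ∀ n : ℕ, xpt n (-(y n)) ∈ {x | ∃ z ∈ Upert x, hy y z ≠ hy y x} := by
    intro n
    rcases Int.units_eq_one_or (y n) with h | h
    · refine ⟨zz n, ?_, ?_⟩
      · simp [xpt, h, Upert, zz, xm]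
      · simp [hy, xpt, h, zz, xm]
    · refine ⟨zz n, ?_, ?_⟩
      · simp [xpt, h, Upert, zz, xp]
      · simp [hy, xpt, h, zz, xp]
  have hz : ∀ n, D {zz n} = 0 := fun n =>
    measure_mono_null (Set.singleton_subset_iff.mpr (key n)) hreal
  have hx : ∀ n, D {xpt n (-(y n))} = 0 := fun n =>
    measure_mono_null (Set.singleton_subset_iff.mpr (keyx n)) hreal
  refine ⟨fun n => ⟨hz n, hx n⟩, fun y' => ?_⟩
  have hsub : {x | hy y' x ≠ hy y x} ⊆ ⋃ n, {zz n} := by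
    rintro ⟨n, s⟩ hmem
    cases s with
    | pos => exact absurd rfl hmem
    | neg => exact absurd rfl hmem
    | zero =>
      exact Set.mem_iUnion.mpr ⟨n, rfl⟩
  exact measure_mono_null hsub (measure_iUnion_null hz)
end

section
/- Let X = ℕ × {−1, 0, +1} with x_n^+ = (n,+1), x_n^- = (n,−1), z_n = (n,0); let U(x_n^+) = {x_n^+, z_n}, U(x_n^-) = {x_n^-, z_n}, U(z_n) = {z_n, x_n^+, x_n^-}; and for y : ℕ → {−1,+1} let h_y(x_n^+) = +1, h_y(x_n^-) = −1, h_y(z_n) = y(n). Let D be a probability measure on X robustly realizable by h_y w.r.t. U, i.e., D{x : ∃ z ∈ U(x), h_y(z) ≠ h_y(x)} = 0. Then for every ỹ : ℕ → {−1,+1}, the robust risk satisfies D{x : ∃ z ∈ U(x), h_ỹ(z) ≠ h_y(x)} = D({x_n^{y(n)} : n ∈ ℕ, ỹ(n) ≠ y(n)}) (where x_n^{+1} = x_n^+ and x_n^{−1} = x_n^-); moreover, letting μ be the i.i.d. uniform product measure on {−1,+1}^ℕ, ∫ D{x : ∃ z ∈ U(x), h_ỹ(z) ≠ h_y(x)}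 dμ(ỹ) = 1/2. -/
open MeasureTheory

instance : MeasurableSingletonClass SignType := ⟨fun _ => MeasurableSpace.measurableSet_top⟩
instance : MeasurableSingletonClass ℤˣ := ⟨fun _ => MeasurableSpace.measurableSet_top⟩

lemma measXsp (s : Set Xsp) : MeasurableSet s := s.to_countable.measurableSet

lemma units_ne_iff (u v : ℤˣ) : u ≠ v ↔ u = -v := by
  rcases Int.units_eq_one_or u with h | h <;> rcases Int.units_eq_one_or v with h2 | h2 <;>
    simp [h, h2] <;> decide

lemma part1 (y y' : ℕ → ℤˣ) (D : Measure Xsp)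
    (hreal : D {x | ∃ z ∈ Upert x, hy y z ≠ hy y x} = 0) :
    D {x | ∃ z ∈ Upert x, hy y' z ≠ hy y x} =
      D {p | ∃ n : ℕ, y' n ≠ y n ∧ p = xpt n (y n)} := by
  set N := {x | ∃ z ∈ Upert x, hy y z ≠ hy y x} with hN
  set T := {p : Xsp | ∃ n : ℕ, y' n ≠ y n ∧ p = xpt n (y n)} with hT
  set S := {x | ∃ z ∈ Upert x, hy y' z ≠ hy y x} with hS
  have hTS : T ⊆ S := by
    rintro p ⟨n, hne, rfl⟩
    rcases Int.units_eq_one_or (y n) with h | h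
    · refine ⟨zz n, ?_, ?_⟩
      · simp [xpt, h, Upert, xp, zz]
      · simp [xpt, h, hy, xp, zz]
        rw [h] at hne
        rcases Int.units_eq_one_or (y' n) with h2 | h2 <;> simp [h2] at hne ⊢
    · refine ⟨zz n, ?_, ?_⟩
      · simp [xpt, h, Upert, xm, zz]
      · simp [xpt, h, hy, xm, zz]
        rw [h] at hne
        rcases Int.units_eq_one_or (y' n) with h2 | h2 <;> simp [h2] at hne ⊢
  have hSTN : S ⊆ T ∪ N := by
    rintro ⟨n, s⟩ ⟨z, hz, hne⟩
    cases s with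
    | pos =>
      simp only [Upert, Set.mem_insert_iff, Set.mem_singleton_iff] at hz
      rcases hz with rfl | rfl
      · exact absurd rfl hne
      · have hy' : y' n = -1 := by
          have : y' n ≠ 1 := by simpa [hy, zz, xp] using hne
          rcases Int.units_eq_one_or (y' n) with h | h; · exact absurd h this
          exact h
        rcases Int.units_eq_one_or (y n) with h | h
        · exact Or.inl ⟨n, by rw [hy', h]; decide, by simp [xpt, h, xp]⟩
        · exact Or.inr ⟨zz n, by simp [Upert, zz, xp], by simp [hy, zz, xp, h]⟩
    | neg =>
      simp only [Upert, Set.mem_insert_iff, Set.mem_singleton_iff] at hz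
      rcases hz with rfl | rfl
      · exact absurd rfl hne
      · have hy' : y' n = 1 := by
          have : y' n ≠ -1 := by simpa [hy, zz, xm] using hne
          rcases Int.units_eq_one_or (y' n) with h | h; · exact h
          exact absurd h this
        rcases Int.units_eq_one_or (y n) with h | h
        · exact Or.inr ⟨zz n, by simp [Upert, zz, xm], by simp [hy, zz, xm, h]⟩
        · exact Or.inl ⟨n, by rw [hy', h]; decide, by simp [xpt, h, xm]⟩
    | zero =>
      refine Or.inr ?_
      rcases Int.units_eq_one_or (y n) with h | h
      · exact ⟨xm n, by simp [Upert, zz, xm], by simp [hy, zz, xm, h]⟩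
      · exact ⟨xp n, by simp [Upert, zz, xp], by simp [hy, zz, xp, h]⟩
  refine le_antisymm ?_ (measure_mono hTS)
  calc D S ≤ D (T ∪ N) := measure_mono hSTN
    _ ≤ D T + D N := measure_union_le _ _
    _ = D T := by rw [hreal, add_zero]

/-- In the hard construction, for `D` robustly realizable by `h_y` w.r.t. `U`, the robust risk
of `h_{y'}` equals the `D`-mass of `{x_n^{y(n)} : y'(n) ≠ y(n)}`, and in expectation over a
uniformly random `y'` (w.r.t. the i.i.d. uniform product measure `μ` on `{−1,+1}^ℕ`,
characterized by its cylinder probabilities) the robust risk is exactly `1/2`. -/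
theorem construction_expected_robust_risk
    (μ : Measure (ℕ → ℤˣ)) (hμprob : IsProbabilityMeasure μ)
    (hμ : ∀ (s : Finset ℕ) (v : ℕ → ℤˣ),
      μ {y' | ∀ n ∈ s, y' n = v n} = (2 : ENNReal)⁻¹ ^ s.card)
    (y : ℕ → ℤˣ) (D : Measure Xsp) (hD : IsProbabilityMeasure D)
    (hreal : D {x | ∃ z ∈ Upert x, hy y z ≠ hy y x} = 0) :
    (∀ y' : ℕ → ℤˣ,
      D {x | ∃ z ∈ Upert x, hy y' z ≠ hy y x} =
        D {p | ∃ n : ℕ, y' n ≠ y n ∧ p = xpt n (y n)}) ∧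
    ∫⁻ y', D {x | ∃ z ∈ Upert x, hy y' z ≠ hy y x} ∂μ = 1 / 2 := by
  refine ⟨fun y' => part1 y y' D hreal, ?_⟩
  set a : ℕ → Xsp := fun n => xpt n (y n) with ha
  have hfst : ∀ n, (a n).1 = n := by
    intro n; by_cases h : y n = 1 <;> simp [ha, xpt, xp, xm, h]
  have hdisj : Pairwise (Function.onFun Disjoint fun n => ({a n} : Set Xsp)) := by
    intro m n hmn
    simp only [Function.onFun, Set.disjoint_singleton]
    intro h; exact hmn (by rw [← hfst m, ← hfst n, h])
  -- D-mass concentrates on the points a n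
  have hcompl : D (⋃ n, ({a n} : Set Xsp))ᶜ = 0 := by
    refine measure_mono_null ?_ hreal
    rintro ⟨n, s⟩ hx
    simp only [Set.mem_compl_iff, Set.mem_iUnion, Set.mem_singleton_iff, not_exists] at hx
    have hxn := hx n
    cases s with
    | pos =>
      have h : y n = -1 := by
        rcases Int.units_eq_one_or (y n) with h | h
        · exact absurd (by simp [ha, xpt, h, xp]) hxn
        · exact h
      exact ⟨zz n, by simp [Upert, zz, xp], by simp [hy, zz, xp, h]⟩
    | neg =>
      have h : y n = 1 := by
        rcases Int.units_eq_one_or (y n) with h | h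
        · exact h
        · exact absurd (by simp [ha, xpt, h, xm]) hxn
      exact ⟨zz n, by simp [Upert, zz, xm], by simp [hy, zz, xm, h]⟩
    | zero =>
      rcases Int.units_eq_one_or (y n) with h | h
      · exact ⟨xm n, by simp [Upert, zz, xm], by simp [hy, zz, xm, h]⟩
      · exact ⟨xp n, by simp [Upert, zz, xp], by simp [hy, zz, xp, h]⟩
  have hsum1 : ∑' n, D {a n} = 1 := by
    rw [← measure_iUnion hdisj fun n => measXsp _]
    have := measure_add_measure_compl (μ := D) (s := ⋃ n, ({a n} : Set Xsp)) (measXsp _)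
    rw [hcompl, add_zero, measure_univ] at this
    exact this
  -- rewrite each robust risk as a tsum of indicators
  have hDT : ∀ y' : ℕ → ℤˣ,
      D {x | ∃ z ∈ Upert x, hy y' z ≠ hy y x} =
        ∑' n, Set.indicator {w : ℕ → ℤˣ | w n ≠ y n} (fun _ => D {a n}) y' := by
    intro y'
    rw [part1 y y' D hreal]
    have hTU : {p : Xsp | ∃ n : ℕ, y' n ≠ y n ∧ p = xpt n (y n)} =
        ⋃ n, {p : Xsp | y' n ≠ y n ∧ p = a n} := by
      ext p; simp [ha]
    rw [hTU, measure_iUnion ?_ fun n => measXsp _]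
    · congr 1; ext n
      by_cases h : y' n ≠ y n
      · have hset : {p : Xsp | y' n ≠ y n ∧ p = a n} = {a n} := by ext p; simp [h]
        have hm : y' ∈ {w : ℕ → ℤˣ | w n ≠ y n} := h
        rw [hset, Set.indicator_of_mem hm]
      · have hset : {p : Xsp | y' n ≠ y n ∧ p = a n} = ∅ := by ext p; simp [h]
        have hm : y' ∉ {w : ℕ → ℤˣ | w n ≠ y n} := h
        rw [hset, Set.indicator_of_notMem hm, measure_empty]
    · intro m n hmn
      simp only [Function.onFun]
      refine Set.disjoint_left.2 fun p hp hq => ?_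
      exact hmn (by rw [← hfst m, ← hfst n, ← hp.2, hq.2])
  have hmeasA : ∀ n, MeasurableSet {w : ℕ → ℤˣ | w n ≠ y n} := by
    intro n
    have he : {w : ℕ → ℤˣ | w n ≠ y n} = (fun w : ℕ → ℤˣ => w n) ⁻¹' {u : ℤˣ | u ≠ y n} := rfl
    rw [he]
    exact (measurable_pi_apply n) ((Set.to_countable _).measurableSet)
  have hμA : ∀ n, μ {w : ℕ → ℤˣ | w n ≠ y n} = 2⁻¹ := by
    intro n
    have : {w : ℕ → ℤˣ | w n ≠ y n} = {y' | ∀ m ∈ ({n} : Finset ℕ), y' m = (fun _ => -(y n)) m} := by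
      ext w; simp [units_ne_iff]
    rw [this, hμ]
    simp
  calc ∫⁻ y', D {x | ∃ z ∈ Upert x, hy y' z ≠ hy y x} ∂μ
      = ∫⁻ y', ∑' n, Set.indicator {w : ℕ → ℤˣ | w n ≠ y n} (fun _ => D {a n}) y' ∂μ := by
        exact lintegral_congr fun y' => hDT y'
    _ = ∑' n, ∫⁻ y', Set.indicator {w : ℕ → ℤˣ | w n ≠ y n} (fun _ => D {a n}) y' ∂μ := by
        exact lintegral_tsum fun n => (measurable_const.indicator (hmeasA n)).aemeasurable
    _ = ∑' n, D {a n} * μ {w : ℕ → ℤˣ | w n ≠ y n} := by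
        congr 1; ext n; rw [lintegral_indicator_const (hmeasA n)]
    _ = (∑' n, D {a n}) * 2⁻¹ := by
        simp_rw [hμA]; rw [ENNReal.tsum_mul_right]
    _ = 1 / 2 := by rw [hsum1, one_mul, one_div]
end
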